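/- In a planar graph G, for any connected subgraph T, DegCost(T) ≤ 6 · Cost(T). -/
import Mathlib


open Finset

/-- The closed neighborhood (as a set) of a set `S` of vertices. -/
def setNbhd {V : Type*} (G : SimpleGraph V) (S : Set V) : Set V :=
  S ∪ {v | ∃ u ∈ S, G.Adj u v}

/-- In a planar graph `G` (formalized via the standard consequence of planarity used in the
paper: every induced subgraph on at least 3 vertices has at most `3n − 6` edges, which is
inherited by all subgraphs of a planar graph), every connected subgraph `T` satisfies
`DegCost(T) ≤ 6 · Cost(T)`. -/
theorem degCost_le_six_cost_planar {V : Type*} [Fintype V]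
    (G : SimpleGraph V) [DecidableRel G.Adj]
    (hplanar : ∀ S : Set V, 3 ≤ S.ncard →
      ({e ∈ G.edgeSet | ∀ v ∈ e, v ∈ S}).ncard ≤ 3 * S.ncard - 6)
    (T : G.Subgraph) (hT : T.Connected) :
    (∑ᶠ u ∈ T.verts, G.degree u) ≤ 6 * (setNbhd G T.verts).ncard := by
  classical
  set S : Set V := setNbhd G T.verts with hS
  have hTS : T.verts ⊆ S := fun v hv => Or.inl hv
  have hnbr : ∀ u ∈ T.verts, ∀ v, G.Adj u v → v ∈ S := fun u hu v huv => Or.inr ⟨u, hu, huv⟩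
  set A : Finset V := T.verts.toFinset with hA
  have h1 : (∑ᶠ u ∈ T.verts, G.degree u) = ∑ u ∈ A, G.degree u := by
    rw [hA, ← finsum_mem_coe_finset]
    simp
  set E : Finset (Sym2 V) := G.edgeFinset.filter (fun e => ∀ v ∈ e, v ∈ S) with hE
  have hdeg : ∀ u ∈ A, G.degree u = (E.filter (fun e => u ∈ e)).card := by
    intro u hu
    have huT : u ∈ T.verts := by simpa [hA] using hu
    rw [← G.card_incidenceFinset_eq_degree]
    congr 1
    ext e
    induction e with
    | h a b =>
      simp only [SimpleGraph.mem_incidenceFinset, SimpleGraph.incidenceSet,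
        Set.mem_sep_iff, Finset.mem_filter, hE, SimpleGraph.mem_edgeFinset,
        SimpleGraph.mem_edgeSet, Sym2.mem_iff]
      constructor
      · rintro ⟨hab, hu'⟩
        refine ⟨⟨hab, ?_⟩, hu'⟩
        intro v hv
        rcases hv with rfl | rfl
        · rcases hu' with rfl | rfl
          · exact hTS huT
          · exact hnbr u huT v hab.symm
        · rcases hu' with rfl | rfl
          · exact hnbr u huT v hab
          · exact hTS huT
      · rintro ⟨⟨hab, _⟩, hu'⟩
        exact ⟨hab, hu'⟩
  -- double counting
  have hsum2 : ∑ u ∈ A, G.degree u ≤ 2 * E.card := by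
    calc ∑ u ∈ A, G.degree u = ∑ u ∈ A, (E.filter (fun e => u ∈ e)).card :=
          Finset.sum_congr rfl hdeg
      _ = ∑ e ∈ E, (A.filter (fun u => u ∈ e)).card := by
          simp only [Finset.card_filter]
          rw [Finset.sum_comm]
      _ ≤ ∑ e ∈ E, 2 := by
          refine Finset.sum_le_sum ?_
          intro e he
          induction e with
          | h a b =>
            calc (A.filter (fun u => u ∈ s(a, b))).card ≤ ({a, b} : Finset V).card := by
                  refine Finset.card_le_card ?_
                  intro u hu
                  simp only [Finset.mem_filter, Sym2.mem_iff] at hu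
                  simp only [Finset.mem_insert, Finset.mem_singleton]
                  exact hu.2
              _ ≤ 2 := Finset.card_insert_le a {b} |>.trans (by simp)
      _ = 2 * E.card := by rw [Finset.sum_const, smul_eq_mul, mul_comm]
  have hEcard : ({e ∈ G.edgeSet | ∀ v ∈ e, v ∈ S}).ncard = E.card := by
    rw [← Set.ncard_coe_finset]
    congr 1
    ext e
    simp [hE, Set.mem_sep_iff]
  have hSfin : S.Finite := Set.toFinite S
  have hSne : S.Nonempty := by
    obtain ⟨w, hw⟩ := hT.nonempty
    exact ⟨w, hTS hw⟩
  have hn1 : 1 ≤ S.ncard := (Set.ncard_pos hSfin).mpr hSne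
  rw [h1]
  by_cases h3 : 3 ≤ S.ncard
  · have hp := hplanar S h3
    rw [hEcard] at hp
    omega
  · -- small case: |S| ≤ 2
    set Fs : Finset V := hSfin.toFinset with hFs
    have hncard : S.ncard = Fs.card := Set.ncard_eq_toFinset_card S hSfin
    have hdegsmall : ∀ u ∈ A, G.degree u ≤ S.ncard - 1 := by
      intro u hu
      have huT : u ∈ T.verts := by simpa [hA] using hu
      have huS : u ∈ Fs := hSfin.mem_toFinset.mpr (hTS huT)
      have hsub : G.neighborFinset u ⊆ Fs.erase u := by
        intro v hv
        rw [SimpleGraph.mem_neighborFinset] at hv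
        exact Finset.mem_erase.mpr ⟨hv.ne', hSfin.mem_toFinset.mpr (hnbr u huT v hv)⟩
      calc G.degree u = (G.neighborFinset u).card := (G.card_neighborFinset_eq_degree u).symm
        _ ≤ (Fs.erase u).card := Finset.card_le_card hsub
        _ = Fs.card - 1 := Finset.card_erase_of_mem huS
        _ = S.ncard - 1 := by rw [hncard]
    have hAcard : A.card ≤ S.ncard := by
      rw [hncard]
      refine Finset.card_le_card ?_
      intro u hu
      have huT : u ∈ T.verts := by simpa [hA] using hu
      exact hSfin.mem_toFinset.mpr (hTS huT)
    have hsum3 : ∑ u ∈ A, G.degree u ≤ A.card * (S.ncard - 1) := by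
      calc ∑ u ∈ A, G.degree u ≤ ∑ u ∈ A, (S.ncard - 1) := Finset.sum_le_sum hdegsmall
        _ = A.card * (S.ncard - 1) := by rw [Finset.sum_const, smul_eq_mul]
    have h4 : A.card * (S.ncard - 1) ≤ 2 * 1 :=
      Nat.mul_le_mul (by omega) (by omega)
    omega
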